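/- Fix n ≥ 2 and a symmetric matrix C_e ∈ ℝ^{n×n}. Let M be orthogonal with A := Mᵀ C_e M, and suppose Ω(M) = 0 but f(M) > 0 (a non-optimal critical point). Then there exist indices i < j with A_{ii} = A_{jj}, A_{ij} ≠ 0, and A_{ij}² ≥ 2 f(M)/(n(n−1)); hence, with Ξ := E_{ij} − E_{ji}, the curve t ↦ f(M exp(tΞ)) has second derivative at t = 0 equal to −8 A_{ij}² ≤ −16 f(M)/(n(n−1)) < 0. In particular every non-optimal critical point admits an explicit negative-curvature (strict saddle) direction. -/

import Mathlib

open Matrix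

/-- The diagonal matrix whose diagonal agrees with `X`. -/
noncomputable def diagPart {n : ℕ} (X : Matrix (Fin n) (Fin n) ℝ) :
    Matrix (Fin n) (Fin n) ℝ :=
  Matrix.diagonal (fun i => X i i)

/-- Frobenius norm of a real square matrix. -/
noncomputable def frobNorm {n : ℕ} (X : Matrix (Fin n) (Fin n) ℝ) : ℝ :=
  Real.sqrt (∑ i, ∑ j, (X i j) ^ 2)

/-- Rotated covariance `A(M) = Mᵀ C_e M`. -/
noncomputable def rotA {n : ℕ} (Ce M : Matrix (Fin n) (Fin n) ℝ) :
    Matrix (Fin n) (Fin n) ℝ := Mᵀ * Ce * M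

/-- The commutator generator `Ω(M) = A D − D A`. -/
noncomputable def genOmega {n : ℕ} (Ce M : Matrix (Fin n) (Fin n) ℝ) :
    Matrix (Fin n) (Fin n) ℝ :=
  rotA Ce M * diagPart (rotA Ce M) - diagPart (rotA Ce M) * rotA Ce M

/-- The diagonalization objective `f(M) = (1/2)‖off(A(M))‖_F²`. -/
noncomputable def objF {n : ℕ} (Ce M : Matrix (Fin n) (Fin n) ℝ) : ℝ :=
  (1 / 2) * frobNorm (rotA Ce M - diagPart (rotA Ce M)) ^ 2

/-!
At a critical point `Ω = AD - DA = 0` reads `A p q * (A q q - A p p) = 0`, so every nonzero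
off-diagonal entry of `A` joins two equal diagonal entries. As `2 f` is the sum of the
`n (n - 1)` squared off-diagonal entries, some `A i j` with `i < j` has
`A i j ^ 2 ≥ 2 f / (n (n - 1)) > 0`, and then `A i i = A j j`. The rotation `exp (t Ξ)` in the
`(i, j)`-plane preserves the Frobenius norm of `A` and, because `A i i = A j j`, changes the
diagonal only at `i` and `j`, to `A i i ∓ sin (2t) A i j`. Hence
`f (M exp (t Ξ)) = f M - A i j ^ 2 sin (2t) ^ 2`, whose second derivative at `0` is `-8 A i j ^ 2`.
-/

namespace Matrix

section Givens

variable {ι : Type*} [DecidableEq ι] {i j : ι}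

noncomputable def givensGen (i j : ι) : Matrix ι ι ℝ :=
  single i j 1 - single j i 1

noncomputable def givensProj (i j : ι) : Matrix ι ι ℝ :=
  single i i 1 + single j j 1

noncomputable def givens (i j : ι) (t : ℝ) : Matrix ι ι ℝ :=
  1 + (Real.cos t - 1) • givensProj i j + Real.sin t • givensGen i j

theorem givensGen_transpose (i j : ι) : (givensGen i j)ᵀ = -givensGen i j := by
  simp [givensGen, transpose_sub, transpose_single]

theorem givens_zero (i j : ι) : givens i j 0 = 1 := by
  simp [givens]

variable [Fintype ι]

theorem givensGen_mul_self (hij : i ≠ j) : givensGen i j * givensGen i j = -givensProj i j := by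
  simp [givensGen, givensProj, sub_mul, mul_sub, hij, hij.symm]
  abel

theorem givensGen_mul_givensProj (hij : i ≠ j) :
    givensGen i j * givensProj i j = givensGen i j := by
  simp [givensGen, givensProj, sub_mul, mul_add, hij, hij.symm]
  abel

theorem givensGen_mul_givens (hij : i ≠ j) (t : ℝ) :
    givensGen i j * givens i j t = (-Real.sin t) • givensProj i j + Real.cos t • givensGen i j := by
  rw [givens, mul_add, mul_add, mul_one, Matrix.mul_smul, Matrix.mul_smul,
    givensGen_mul_givensProj hij, givensGen_mul_self hij]
  module

section Exp

attribute [local instance] Matrix.linftyOpNormedRing Matrix.linftyOpNormedAlgebra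

theorem hasDerivAt_givens (i j : ι) (t : ℝ) :
    HasDerivAt (givens i j) ((-Real.sin t) • givensProj i j + Real.cos t • givensGen i j) t := by
  have h := ((hasDerivAt_const t (1 : Matrix ι ι ℝ)).add
    (((Real.hasDerivAt_cos t).sub_const 1).smul_const (givensProj i j))).add
    ((Real.hasDerivAt_sin t).smul_const (givensGen i j))
  exact h.congr_deriv (by simp)

-- `t ↦ exp (-t • Ξ) * givens i j t` has derivative zero, so it is constantly `1`.
theorem exp_smul_givensGen (hij : i ≠ j) (t : ℝ) :
    NormedSpace.exp (t • givensGen i j) = givens i j t := by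
  have hderiv (s : ℝ) : HasDerivAt
      (fun u : ℝ => NormedSpace.exp (u • -givensGen i j) * givens i j u) 0 s := by
    refine ((hasDerivAt_exp_smul_const (-givensGen i j) s).mul
      (hasDerivAt_givens i j s)).congr_deriv ?_
    rw [← givensGen_mul_givens hij s]
    simp [mul_assoc]
  have hconst : NormedSpace.exp (t • -givensGen i j) * givens i j t = 1 := by
    simpa [givens_zero] using is_const_of_deriv_eq_zero (fun u => (hderiv u).differentiableAt)
      (fun u => (hderiv u).deriv) t 0
  have hinv : NormedSpace.exp (t • givensGen i j) * NormedSpace.exp (t • -givensGen i j) = 1 := by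
    rw [← exp_add_of_commute _ _
      (((Commute.refl (givensGen i j)).neg_right.smul_left t).smul_right t)]
    simp
  calc NormedSpace.exp (t • givensGen i j)
      = NormedSpace.exp (t • givensGen i j) *
          (NormedSpace.exp (t • -givensGen i j) * givens i j t) := by rw [hconst, mul_one]
    _ = givens i j t := by rw [← mul_assoc, hinv, one_mul]

end Exp

theorem givens_transpose_mul_self (hij : i ≠ j) (t : ℝ) : (givens i j t)ᵀ * givens i j t = 1 := by
  rw [← exp_smul_givensGen hij, ← exp_transpose, transpose_smul, givensGen_transpose, smul_neg,
    ← exp_add_of_commute _ _ (Commute.refl (t • givensGen i j)).neg_left, neg_add_cancel,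
    NormedSpace.exp_zero]

end Givens

section Entries

variable {ι : Type*} [DecidableEq ι] {i j p : ι}

theorem givens_apply_of_ne (hpi : p ≠ i) (hpj : p ≠ j) (t : ℝ) (k : ι) :
    givens i j t k p = if k = p then 1 else 0 := by
  simp [givens, givensGen, givensProj, one_apply, single, hpi.symm, hpj.symm]

theorem givens_apply_left (hij : i ≠ j) (t : ℝ) (k : ι) :
    givens i j t k i = (if k = i then Real.cos t else 0) + (if k = j then -Real.sin t else 0) := by
  by_cases hki : k = i <;> by_cases hkj : k = j <;>
    simp_all [givens, givensGen, givensProj, one_apply, single, eq_comm]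

theorem givens_apply_right (hij : i ≠ j) (t : ℝ) (k : ι) :
    givens i j t k j = (if k = j then Real.cos t else 0) + (if k = i then Real.sin t else 0) := by
  by_cases hki : k = i <;> by_cases hkj : k = j <;>
    simp_all [givens, givensGen, givensProj, single, eq_comm]

end Entries

section Conj

variable {ι : Type*} [Fintype ι]

theorem transpose_mul_mul_apply (h X : Matrix ι ι ℝ) (p q : ι) :
    (hᵀ * X * h) p q = ∑ k, ∑ l, h k p * X k l * h l q := by
  simp only [mul_apply, transpose_apply, Finset.sum_mul]
  exact Finset.sum_comm

theorem sum_sq_eq_trace (Y : Matrix ι ι ℝ) : ∑ p, ∑ q, Y p q ^ 2 = trace (Yᵀ * Y) := by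
  rw [Finset.sum_comm]
  simp [trace, mul_apply, sq]

variable [DecidableEq ι] {i j p : ι}

theorem sum_sq_transpose_mul_mul {h : Matrix ι ι ℝ} (hh : hᵀ * h = 1) (X : Matrix ι ι ℝ) :
    ∑ p, ∑ q, (hᵀ * X * h) p q ^ 2 = ∑ p, ∑ q, X p q ^ 2 := by
  have hh' : h * hᵀ = 1 := mul_eq_one_comm.mp hh
  have hconj : (hᵀ * X * h)ᵀ * (hᵀ * X * h) = hᵀ * (Xᵀ * X) * h := by
    simp only [transpose_mul, transpose_transpose, Matrix.mul_assoc]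
    rw [← Matrix.mul_assoc h hᵀ, hh', Matrix.one_mul]
  rw [sum_sq_eq_trace, sum_sq_eq_trace, hconj, trace_mul_cycle, hh', Matrix.one_mul]

theorem conj_givens_apply_of_ne (hpi : p ≠ i) (hpj : p ≠ j) (t : ℝ) (X : Matrix ι ι ℝ) :
    ((givens i j t)ᵀ * X * givens i j t) p p = X p p := by
  simp [transpose_mul_mul_apply, givens_apply_of_ne hpi hpj]

theorem conj_givens_apply_left (hij : i ≠ j) (t : ℝ) (X : Matrix ι ι ℝ) :
    ((givens i j t)ᵀ * X * givens i j t) i i = Real.cos t ^ 2 * X i i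
      - Real.sin t * Real.cos t * (X i j + X j i) + Real.sin t ^ 2 * X j j := by
  simp [transpose_mul_mul_apply, givens_apply_left hij, ite_mul, mul_ite, add_mul, mul_add,
    Finset.sum_add_distrib]
  ring

theorem conj_givens_apply_right (hij : i ≠ j) (t : ℝ) (X : Matrix ι ι ℝ) :
    ((givens i j t)ᵀ * X * givens i j t) j j = Real.cos t ^ 2 * X j j
      + Real.sin t * Real.cos t * (X i j + X j i) + Real.sin t ^ 2 * X i i := by
  simp [transpose_mul_mul_apply, givens_apply_right hij, ite_mul, mul_ite, add_mul, mul_add,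
    Finset.sum_add_distrib]
  ring

theorem sum_sq_diag_conj_givens {X : Matrix ι ι ℝ} (hX : X.IsSymm) (hij : i ≠ j)
    (hd : X i i = X j j) (t : ℝ) :
    ∑ p, ((givens i j t)ᵀ * X * givens i j t) p p ^ 2
      = ∑ p, X p p ^ 2 + 2 * X i j ^ 2 * Real.sin (2 * t) ^ 2 := by
  have hdiff : ∑ p, (((givens i j t)ᵀ * X * givens i j t) p p ^ 2 - X p p ^ 2)
      = 2 * X i j ^ 2 * Real.sin (2 * t) ^ 2 := by
    rw [Fintype.sum_eq_add i j hij fun p hp => by rw [conj_givens_apply_of_ne hp.1 hp.2, sub_self],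
      conj_givens_apply_left hij, conj_givens_apply_right hij, hX.apply i j, ← hd,
      Real.sin_two_mul]
    linear_combination
      2 * X i i ^ 2 * (Real.sin t ^ 2 + Real.cos t ^ 2 + 1) * Real.sin_sq_add_cos_sq t
  rw [← hdiff, Finset.sum_sub_distrib]
  ring

end Conj

end Matrix

section Objective

variable {n : ℕ}

theorem frobNorm_sub_diagPart_sq (X : Matrix (Fin n) (Fin n) ℝ) :
    frobNorm (X - diagPart X) ^ 2 = ∑ p, ∑ q, X p q ^ 2 - ∑ p, X p p ^ 2 := by
  have hentry (p q : Fin n) :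
      (X - diagPart X) p q ^ 2 = X p q ^ 2 - if p = q then X p p ^ 2 else 0 := by
    by_cases h : p = q
    · subst h; simp [diagPart]
    · simp [diagPart, h]
  rw [frobNorm, Real.sq_sqrt (by positivity)]
  simp_rw [hentry, Finset.sum_sub_distrib, Finset.sum_ite_eq, Finset.mem_univ, if_true]

theorem frobNorm_sub_diagPart_sq_eq_sum_offDiag (X : Matrix (Fin n) (Fin n) ℝ) :
    frobNorm (X - diagPart X) ^ 2
      = ∑ r ∈ (Finset.univ : Finset (Fin n)).offDiag, X r.1 r.2 ^ 2 := by
  rw [frobNorm_sub_diagPart_sq, sub_eq_iff_eq_add', ← Finset.sum_product',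
    ← Finset.diag_union_offDiag, Finset.sum_union (Finset.disjoint_diag_offDiag _), Finset.sum_diag]

theorem frobNorm_sub_diagPart_conj_givens_sq {X : Matrix (Fin n) (Fin n) ℝ} (hX : X.IsSymm)
    {i j : Fin n} (hij : i ≠ j) (hd : X i i = X j j) (t : ℝ) :
    frobNorm ((givens i j t)ᵀ * X * givens i j t
        - diagPart ((givens i j t)ᵀ * X * givens i j t)) ^ 2
      = frobNorm (X - diagPart X) ^ 2 - 2 * X i j ^ 2 * Real.sin (2 * t) ^ 2 := by
  rw [frobNorm_sub_diagPart_sq, frobNorm_sub_diagPart_sq,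
    sum_sq_transpose_mul_mul (givens_transpose_mul_self hij t), sum_sq_diag_conj_givens hX hij hd]
  ring

theorem rotA_isSymm {Ce : Matrix (Fin n) (Fin n) ℝ} (hCe : Ce.IsSymm)
    (M : Matrix (Fin n) (Fin n) ℝ) :
    (rotA Ce M).IsSymm := by
  simp [rotA, IsSymm, transpose_mul, hCe.eq, Matrix.mul_assoc]

theorem rotA_mul (Ce M h : Matrix (Fin n) (Fin n) ℝ) : rotA Ce (M * h) = hᵀ * rotA Ce M * h := by
  simp [rotA, transpose_mul, Matrix.mul_assoc]

theorem two_mul_objF (Ce M : Matrix (Fin n) (Fin n) ℝ) :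
    2 * objF Ce M = ∑ r ∈ (Finset.univ : Finset (Fin n)).offDiag, rotA Ce M r.1 r.2 ^ 2 := by
  rw [objF, ← frobNorm_sub_diagPart_sq_eq_sum_offDiag]
  ring

theorem objF_mul_exp_smul_givensGen {Ce M : Matrix (Fin n) (Fin n) ℝ} (hA : (rotA Ce M).IsSymm)
    {i j : Fin n} (hij : i ≠ j) (hd : rotA Ce M i i = rotA Ce M j j) (t : ℝ) :
    objF Ce (M * NormedSpace.exp (t • givensGen i j))
      = objF Ce M - rotA Ce M i j ^ 2 * Real.sin (2 * t) ^ 2 := by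
  rw [objF, objF, exp_smul_givensGen hij, rotA_mul, frobNorm_sub_diagPart_conj_givens_sq hA hij hd]
  ring

theorem genOmega_apply (Ce M : Matrix (Fin n) (Fin n) ℝ) (p q : Fin n) :
    genOmega Ce M p q = rotA Ce M p q * (rotA Ce M q q - rotA Ce M p p) := by
  simp [genOmega, diagPart]
  ring

theorem rotA_apply_eq_of_genOmega_eq_zero {Ce M : Matrix (Fin n) (Fin n) ℝ} (h : genOmega Ce M = 0)
    {p q : Fin n} (hpq : rotA Ce M p q ≠ 0) : rotA Ce M p p = rotA Ce M q q := by
  have := congrFun (congrFun h p) q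
  rw [genOmega_apply, Matrix.zero_apply, mul_eq_zero, sub_eq_zero] at this
  exact (this.resolve_left hpq).symm

end Objective

theorem Finset.exists_sum_div_card_le {α : Type*} {s : Finset α} (hs : s.Nonempty) (g : α → ℝ) :
    ∃ r ∈ s, (∑ x ∈ s, g x) / s.card ≤ g r := by
  refine Finset.exists_le_of_sum_le hs ?_
  rw [Finset.sum_const, nsmul_eq_mul, mul_div_cancel₀ _ (by exact_mod_cast hs.card_ne_zero)]

theorem Matrix.IsSymm.exists_lt_sum_offDiag_div_le_sq {n : ℕ} {X : Matrix (Fin n) (Fin n) ℝ}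
    (hX : X.IsSymm) (hpos : 0 < ∑ r ∈ (Finset.univ : Finset (Fin n)).offDiag, X r.1 r.2 ^ 2) :
    ∃ i j : Fin n, i < j ∧
      (∑ r ∈ (Finset.univ : Finset (Fin n)).offDiag, X r.1 r.2 ^ 2) / (n * (n - 1))
        ≤ X i j ^ 2 := by
  obtain ⟨⟨p, q⟩, hpq, hle⟩ := Finset.exists_sum_div_card_le
    (Finset.nonempty_of_sum_ne_zero hpos.ne') fun r => X r.1 r.2 ^ 2
  have hcard : ((Finset.univ : Finset (Fin n)).offDiag.card : ℝ) = n * (n - 1) := by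
    rw [Finset.offDiag_card, Finset.card_univ, Fintype.card_fin, Nat.cast_sub (Nat.le_mul_self n)]
    push_cast
    ring
  rw [hcard] at hle
  rw [Finset.mem_offDiag] at hpq
  rcases lt_or_gt_of_ne hpq.2.2 with h | h
  · exact ⟨p, q, h, hle⟩
  · exact ⟨q, p, h, by rwa [hX.apply]⟩

theorem iteratedDeriv_two_sub_mul_sin_two_mul_sq (C a : ℝ) :
    iteratedDeriv 2 (fun t : ℝ => C - a ^ 2 * Real.sin (2 * t) ^ 2) 0 = -8 * a ^ 2 := by
  have hcos : (fun t : ℝ => C - a ^ 2 * Real.sin (2 * t) ^ 2)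
      = fun t => (C - a ^ 2 / 2) + a ^ 2 / 2 * Real.cos (4 * t) := by
    funext t
    rw [show 4 * t = 2 * (2 * t) by ring, Real.cos_two_mul, Real.cos_sq']
    ring
  rw [hcos, iteratedDeriv_const_add two_pos, iteratedDeriv_const_mul_field,
    iteratedDeriv_comp_const_mul Real.contDiff_cos]
  have hcos2 : iteratedDeriv 2 Real.cos = -Real.cos := by simp
  simp [hcos2]
  ring

theorem strict_saddle_explicit_direction_general {n : ℕ}
    (Ce M : Matrix (Fin n) (Fin n) ℝ) (hCe : Ceᵀ = Ce)
    (hcrit : genOmega Ce M = 0) (hpos : 0 < objF Ce M) :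
    ∃ i j : Fin n, i < j ∧
      rotA Ce M i i = rotA Ce M j j ∧
      rotA Ce M i j ≠ 0 ∧
      2 * objF Ce M / ((n : ℝ) * ((n : ℝ) - 1)) ≤ rotA Ce M i j ^ 2 ∧
      iteratedDeriv 2
        (fun t : ℝ => objF Ce (M * NormedSpace.exp
            (t • (Matrix.single i j (1 : ℝ) - Matrix.single j i (1 : ℝ))))) 0
        = -8 * rotA Ce M i j ^ 2 ∧
      -8 * rotA Ce M i j ^ 2 ≤ -16 * objF Ce M / ((n : ℝ) * ((n : ℝ) - 1)) ∧
      -16 * objF Ce M / ((n : ℝ) * ((n : ℝ) - 1)) < 0 := by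
  have hA := rotA_isSymm hCe M
  obtain ⟨i, j, hij, hle⟩ := hA.exists_lt_sum_offDiag_div_le_sq (by rw [← two_mul_objF]; positivity)
  rw [← two_mul_objF] at hle
  have hn : (0 : ℝ) < n * (n - 1) := by
    have : (2 : ℝ) ≤ n := by exact_mod_cast (show 2 ≤ n by omega)
    nlinarith
  have hbound : 0 < 2 * objF Ce M / (n * (n - 1)) := by positivity
  have hne : rotA Ce M i j ≠ 0 := fun h => by simp [h] at hle; linarith
  have hd := rotA_apply_eq_of_genOmega_eq_zero hcrit hne
  have hcurve : (fun t : ℝ => objF Ce (M * NormedSpace.exp (t • givensGen i j)))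
      = fun t => objF Ce M - rotA Ce M i j ^ 2 * Real.sin (2 * t) ^ 2 :=
    funext (objF_mul_exp_smul_givensGen hA hij.ne hd)
  refine ⟨i, j, hij, hd, hne, hle, ?_, ?_, ?_⟩
  · exact hcurve ▸ iteratedDeriv_two_sub_mul_sin_two_mul_sq _ _
  · rw [show -16 * objF Ce M / (n * (n - 1)) = -8 * (2 * objF Ce M / (n * (n - 1))) by ring]
    linarith
  · exact div_neg_of_neg_of_pos (by linarith) hn

/-- **Strict saddle property with explicit escape direction**: at a non-optimal critical
point (`Ω(M) = 0`, `f(M) > 0`) there are indices `i < j` with `A_ii = A_jj`,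
`A_ij ≠ 0`, `A_ij² ≥ 2f(M)/(n(n−1))`, and the Givens curve through `Ξ = E_ij − E_ji`
has second derivative `−8A_ij² ≤ −16f(M)/(n(n−1)) < 0` at `t = 0`. -/
theorem strict_saddle_explicit_direction {n : ℕ} (hn : 2 ≤ n)
    (Ce M : Matrix (Fin n) (Fin n) ℝ) (hCe : Ceᵀ = Ce) (hM : Mᵀ * M = 1)
    (hcrit : genOmega Ce M = 0) (hpos : 0 < objF Ce M) :
    ∃ i j : Fin n, i < j ∧
      rotA Ce M i i = rotA Ce M j j ∧
      rotA Ce M i j ≠ 0 ∧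
      2 * objF Ce M / ((n : ℝ) * ((n : ℝ) - 1)) ≤ rotA Ce M i j ^ 2 ∧
      iteratedDeriv 2
        (fun t : ℝ => objF Ce (M * NormedSpace.exp
            (t • (Matrix.single i j (1 : ℝ) - Matrix.single j i (1 : ℝ))))) 0
        = -8 * rotA Ce M i j ^ 2 ∧
      -8 * rotA Ce M i j ^ 2 ≤ -16 * objF Ce M / ((n : ℝ) * ((n : ℝ) - 1)) ∧
      -16 * objF Ce M / ((n : ℝ) * ((n : ℝ) - 1)) < 0 :=
  strict_saddle_explicit_direction_general Ce M hCe hcrit hpos
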